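/- One-step conflict preservation: Let δ_p, δ_q be decision maps for a patient protocol on two processes in the DLL model (δ_p(π·none) = δ_p(π) and δ_q(π·none) = δ_q(π) for every prefix π), satisfying the indistinguishability relations δ_p(π·pq) = δ_p(π·none), δ_q(π·pq) = δ_q(π·pqp), δ_p(π·pqp) = δ_p(π·qp), δ_q(π·qp) = δ_q(π·none). If the prefix π is conflicted, i.e., δ_p(π) ≠ δ_q(π), then at least one of the three extensions π·pq, π·pqp, π·qp is also conflicted. -/
import Mathlib

/-- The four possible round graphs in the Delayed Lossy-Link model. -/
inductive DLLGraph : Type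
  | pq | qp | pqp | silent
deriving DecidableEq

open DLLGraph in
/-- One-step conflict preservation: for a patient protocol satisfying the DLL
indistinguishability relations, any conflicted prefix has a conflicted
one-round extension among π·pq, π·pqp, π·qp. -/
theorem stmt_8 (O : Type*) (δp δq : List DLLGraph → O)
    -- patience: appending a silent round changes no decision
    (hpatp : ∀ π : List DLLGraph, δp (π ++ [silent]) = δp π)
    (hpatq : ∀ π : List DLLGraph, δq (π ++ [silent]) = δq π)
    -- indistinguishability relations
    (h1 : ∀ π : List DLLGraph, δp (π ++ [pq]) = δp (π ++ [silent]))
    (h2 : ∀ π : List DLLGraph, δq (π ++ [pq]) = δq (π ++ [pqp]))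
    (h3 : ∀ π : List DLLGraph, δp (π ++ [pqp]) = δp (π ++ [qp]))
    (h4 : ∀ π : List DLLGraph, δq (π ++ [qp]) = δq (π ++ [silent]))
    (π : List DLLGraph) (hconf : δp π ≠ δq π) :
    δp (π ++ [pq]) ≠ δq (π ++ [pq]) ∨
    δp (π ++ [pqp]) ≠ δq (π ++ [pqp]) ∨
    δp (π ++ [qp]) ≠ δq (π ++ [qp]) := by
  by_contra h
  push_neg at h
  obtain ⟨e1, e2, e3⟩ := h
  apply hconf
  calc δp π = δp (π ++ [silent]) := (hpatp π).symm
    _ = δp (π ++ [pq]) := (h1 π).symm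
    _ = δq (π ++ [pq]) := e1
    _ = δq (π ++ [pqp]) := h2 π
    _ = δp (π ++ [pqp]) := e2.symm
    _ = δp (π ++ [qp]) := h3 π
    _ = δq (π ++ [qp]) := e3
    _ = δq (π ++ [silent]) := h4 π
    _ = δq π := hpatq π
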